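/- Let n ≥ 1, 1 ≤ q ≤ p < n, δ > 0, and let w ∈ A_{q,𝓡} on ℝⁿ. Let μ be a locally finite Borel measure on ℝⁿ and define a(R) = d(R)^δ (μ(R)/w(R))^{1/p} for R ∈ 𝓡. Let M > 1 satisfy δ/(nqM) < 1/p, define p*_M by 1/p − 1/p*_M = δ/(nqM), and set M' = M/(M−1). Then for every R ∈ 𝓡 and every countable family {R_i} of pairwise disjoint dyadic subrectangles of R, ( Σ_i a(R_i)^{p*_M} w(R_i)/w(R) )^{1/p*_M} ≤ [w]_{A_{q,𝓡}}^{δ/(nqM)} · ( |⋃_i R_i| / |R| )^{δ/(nM')} · a(R). -/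

import Mathlib

open MeasureTheory Set
open scoped ENNReal NNReal

noncomputable section

/-- `n`-dimensional Euclidean space. -/
abbrev ES (n : ℕ) := EuclideanSpace ℝ (Fin n)

/-- The extended-nonnegative-real absolute value of a real number. -/
def en (r : ℝ) : ℝ≥0∞ := (‖r‖₊ : ℝ≥0∞)

/-- A rectangle in `ℝⁿ` with sides parallel to the coordinate axes, given by its
(nondegenerate, bounded) interval endpoints. -/
structure Rect (n : ℕ) where
  lo : Fin n → ℝ
  hi : Fin n → ℝ
  lt : ∀ i, lo i < hi i

/-- The underlying set of a rectangle (half-open, so that dyadic pieces are disjoint). -/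
def Rect.set {n : ℕ} (R : Rect n) : Set (ES n) :=
  {x | ∀ i, x i ∈ Set.Ico (R.lo i) (R.hi i)}

/-- The (Euclidean) diameter of a rectangle. -/
def Rect.diam {n : ℕ} (R : Rect n) : ℝ :=
  Real.sqrt (∑ i, (R.hi i - R.lo i) ^ 2)

/-- `R.DyadicSub S` : `S` is a dyadic subrectangle of `R`, i.e. is obtained from `R`
by finitely many iterated passages to dyadic children (bisection of every side);
at generation `j` each side of `R` is split into `2^j` equal parts. -/
def Rect.DyadicSub {n : ℕ} (R S : Rect n) : Prop :=
  ∃ (j : ℕ) (k : Fin n → ℕ), (∀ i, k i < 2 ^ j) ∧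
    (∀ i, S.lo i = R.lo i + (k i : ℝ) * (R.hi i - R.lo i) / 2 ^ j) ∧
    (∀ i, S.hi i = R.lo i + ((k i : ℝ) + 1) * (R.hi i - R.lo i) / 2 ^ j)

/-- The eccentricity `e(R) = |R|^{1/n} / d(R)` of a rectangle. -/
def eccen {n : ℕ} (R : Rect n) : ℝ :=
  (volume R.set).toReal ^ ((1 : ℝ) / n) / R.diam

/-- An axis-parallel (half-open) cube with corner `a` and sidelength `ℓ`. -/
def cubeSet {n : ℕ} (a : Fin n → ℝ) (ℓ : ℝ) : Set (ES n) :=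
  {x | ∀ i, x i ∈ Set.Ico (a i) (a i + ℓ)}

section Weights

variable {X : Type} [MeasureSpace X]

/-- A weight, seen as an `ℝ≥0∞`-valued density. -/
def wE (w : X → ℝ) (x : X) : ℝ≥0∞ := ENNReal.ofReal (w x)

/-- `w(E) = ∫_E w dx`. -/
def wMeas (w : X → ℝ) (E : Set X) : ℝ≥0∞ := ∫⁻ x in E, wE w x

/-- The average `(1/|E|) ∫_E g` (with values in `ℝ≥0∞`). -/
def lavg (g : X → ℝ≥0∞) (E : Set X) : ℝ≥0∞ := (∫⁻ x in E, g x) / volume E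

/-- The Muckenhoupt `A_q` constant of the weight `w` relative to the family `F` of sets:
for `q = 1` it is the least `c` with `⨍_E w ≤ c · essinf_E w` for all `E ∈ F`, and for
`q ≠ 1` it is `sup_{E ∈ F} (⨍_E w)(⨍_E w^{-1/(q-1)})^{q-1}`. -/
def aqConstOn (F : Set (Set X)) (q : ℝ) (w : X → ℝ) : ℝ≥0∞ :=
  if q = 1 then
    sInf {c : ℝ≥0∞ | ∀ E ∈ F, lavg (wE w) E ≤ c * essInf (wE w) (volume.restrict E)}
  else
    ⨆ E ∈ F, lavg (wE w) E * (lavg (fun x => wE w x ^ (-1 / (q - 1))) E) ^ (q - 1)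

/-- The maximal operator associated to the family `F`. -/
def maxOnFam (F : Set (Set X)) (g : X → ℝ≥0∞) (x : X) : ℝ≥0∞ :=
  ⨆ E ∈ F, ⨆ _ : x ∈ E, lavg g E

/-- The Fujii–Wilson `A_∞` constant of `w` relative to the family `F`:
`sup_{E∈F} (1/w(E)) ∫_E M_F(w χ_E)`. -/
def fwOn (F : Set (Set X)) (w : X → ℝ) : ℝ≥0∞ :=
  ⨆ E ∈ F, (∫⁻ x in E, maxOnFam F (E.indicator (wE w)) x) / wMeas w E

end Weights

/-- The family `𝓡` of axis-parallel rectangles of `ℝⁿ` (as sets). -/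
def rectFamily (n : ℕ) : Set (Set (ES n)) := Set.range (Rect.set (n := n))

/-- The family of axis-parallel cubes of `ℝⁿ` (as sets). -/
def cubeFamily (n : ℕ) : Set (Set (ES n)) :=
  {E | ∃ (a : Fin n → ℝ) (ℓ : ℝ), 0 < ℓ ∧ E = cubeSet a ℓ}

/-- `[w]_{A_{q,𝓡}}`. -/
def aqR (n : ℕ) (q : ℝ) (w : ES n → ℝ) : ℝ≥0∞ := aqConstOn (rectFamily n) q w

/-- `[w]_{A_q}` over cubes. -/
def aqCube (n : ℕ) (q : ℝ) (w : ES n → ℝ) : ℝ≥0∞ := aqConstOn (cubeFamily n) q w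

/-- The Fujii–Wilson constant `[w]_{A_{∞,𝓡}}`. -/
def fwR (n : ℕ) (w : ES n → ℝ) : ℝ≥0∞ := fwOn (rectFamily n) w

/-- The `SD^s_{p,𝓡}(w)` (smallness-preserving) condition with constant `c` for a functional
`a` on rectangles: for every rectangle `R` and every countable pairwise disjoint family of
dyadic subrectangles of `R`,
`(Σ_i a(R_i)^p w(R_i)/w(R))^{1/p} ≤ c (|⋃ R_i|/|R|)^{1/s} a(R)`. -/
def SDCond (n : ℕ) (p s c : ℝ) (w : ES n → ℝ) (a : Rect n → ℝ) : Prop :=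
  ∀ (R : Rect n) (S : Set ℕ) (T : ℕ → Rect n),
    (∀ i ∈ S, R.DyadicSub (T i)) →
    (S.PairwiseDisjoint fun i => (T i).set) →
    (∑' i : S, ENNReal.ofReal (a (T ↑i)) ^ p * wMeas w (T ↑i).set / wMeas w R.set) ^ (1 / p)
      ≤ ENNReal.ofReal c * (volume (⋃ i ∈ S, (T i).set) / volume R.set) ^ (1 / s) *
          ENNReal.ofReal (a R)

/-- The `D_{p,𝓡}(w)` condition with constant `c` for a functional `a` on rectangles. -/
def DCond (n : ℕ) (p c : ℝ) (w : ES n → ℝ) (a : Rect n → ℝ) : Prop :=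
  ∀ (R : Rect n) (S : Set ℕ) (T : ℕ → Rect n),
    (∀ i ∈ S, R.DyadicSub (T i)) →
    (S.PairwiseDisjoint fun i => (T i).set) →
    (∑' i : S, ENNReal.ofReal (a (T ↑i)) ^ p * wMeas w (T ↑i).set / wMeas w R.set) ^ (1 / p)
      ≤ ENNReal.ofReal (c * a R)

/-- `g` is (everywhere equal to) a polynomial of total degree at most `k` in the `n`
coordinates. -/
def IsPolyDeg (n k : ℕ) (g : ES n → ℝ) : Prop :=
  ∃ p : MvPolynomial (Fin n) ℝ, p.totalDegree ≤ k ∧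
    ∀ x : ES n, g x = MvPolynomial.eval (fun i => x i) p

/-- `g = P_E f`, the orthogonal projection of `f` onto polynomials of degree at most `k`
with respect to the inner product `⟨u,v⟩_E = (1/|E|)∫_E u v`. -/
def IsProjOn (n k : ℕ) (E : Set (ES n)) (f g : ES n → ℝ) : Prop :=
  IsPolyDeg n k g ∧ ∀ φ : ES n → ℝ, IsPolyDeg n k φ → ∫ x in E, (f x - g x) * φ x = 0

/-- `|∇^m f|(x)`: Euclidean norm of the collection of all `m`-th order partial
derivatives of `f` at `x`. -/
def gradmNorm (n m : ℕ) (f : ES n → ℝ) (x : ES n) : ℝ :=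
  Real.sqrt (∑ idx : Fin m → Fin n,
    (iteratedFDeriv ℝ m f x (fun j => EuclideanSpace.single (idx j) (1 : ℝ))) ^ 2)

/-- The dyadic maximal function relative to the rectangle `R`. -/
def dyadMax {n : ℕ} (R : Rect n) (g : ES n → ℝ≥0∞) (x : ES n) : ℝ≥0∞ :=
  ⨆ J : Rect n, ⨆ _ : R.DyadicSub J, ⨆ _ : x ∈ J.set, lavg g J.set

/-- The sharp maximal function `M_k^♯ f(x) = sup_{R ∋ x} ⨍_R |f − P_R f|`, where `P R`
is (assumed to be) the degree-`k` polynomial projection of `f` on `R`. -/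
def sharpMax (n : ℕ) (f : ES n → ℝ) (P : Rect n → ES n → ℝ) (x : ES n) : ℝ≥0∞ :=
  ⨆ R : Rect n, ⨆ _ : x ∈ R.set, lavg (fun y => en (f y - P R y)) R.set

/-- A rectangle of the biparameter family `𝓡_c`: a product of two axis-parallel cubes
`I₁ ⊂ ℝ^{n₁}`, `I₂ ⊂ ℝ^{n₂}`. -/
structure CRect (n₁ n₂ : ℕ) where
  c₁ : Fin n₁ → ℝ
  c₂ : Fin n₂ → ℝ
  l₁ : ℝ
  l₂ : ℝ
  hl₁ : 0 < l₁
  hl₂ : 0 < l₂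

/-- The underlying set `I₁ × I₂` of a biparameter rectangle. -/
def CRect.set {n₁ n₂ : ℕ} (R : CRect n₁ n₂) : Set (ES n₁ × ES n₂) :=
  (cubeSet R.c₁ R.l₁) ×ˢ (cubeSet R.c₂ R.l₂)

/-- The family `𝓡_c` (as sets). -/
def cRectFamily (n₁ n₂ : ℕ) : Set (Set (ES n₁ × ES n₂)) :=
  Set.range (CRect.set (n₁ := n₁) (n₂ := n₂))

/-- `[w]_{A_{q,𝓡_c}}`. -/
def aqC (n₁ n₂ : ℕ) (q : ℝ) (w : ES n₁ × ES n₂ → ℝ) : ℝ≥0∞ :=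
  aqConstOn (cRectFamily n₁ n₂) q w

/-- `|∇₁ f|(z)`: Euclidean norm of the partial gradient of `f` in the first `n₁`
variables (via the a.e.-defined Fréchet derivative). -/
def grad1Norm (n₁ n₂ : ℕ) (f : ES n₁ × ES n₂ → ℝ) (z : ES n₁ × ES n₂) : ℝ :=
  Real.sqrt (∑ i : Fin n₁, (fderiv ℝ f z (EuclideanSpace.single i (1 : ℝ), 0)) ^ 2)

/-- `|∇₂ f|(z)`: Euclidean norm of the partial gradient of `f` in the last `n₂`
variables. -/
def grad2Norm (n₁ n₂ : ℕ) (f : ES n₁ × ES n₂ → ℝ) (z : ES n₁ × ES n₂) : ℝ :=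
  Real.sqrt (∑ i : Fin n₂, (fderiv ℝ f z (0, EuclideanSpace.single i (1 : ℝ))) ^ 2)

/-!
A dyadic subrectangle `S` of `R` is `R` scaled by some `ρ = 2⁻ʲ` in every side, so
`d(S) = ρ d(R)` and `|S| = ρⁿ |R|`, while the `A_q` condition gives
`(|S|/|R|)^q ≤ [w] w(S)/w(R)`. With `β = p*δ/(nqM)` and `γ = p*δ/(nM')` these combine into
`a(S)^{p*} w(S)/w(R) ≤ [w]^β (|S|/|R|)^γ a(R)^{p*} μ(S)/μ(R)`: the power of `ρ` splits as
`δp* = nqβ + nγ`, which is the definition of `p* = p*_M`, and `μ(S)^{1+β} ≤ μ(S) μ(R)^β`.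
Summing over the disjoint family, `|S_i| ≤ |⋃ S_i|` and `∑ μ(S_i) ≤ μ(R)`.
-/

namespace ENNReal

/-- The estimate for one dyadic subrectangle `S ⊆ R` once the common factor
`(|S|/|R|)^γ a(R)^{p*}` is cancelled, with `x = (|S|/|R|)^q`, `m = μ(S)/μ(R)`, `v = w(S)/w(R)`. -/
theorem rpow_mul_div_rpow_one_add_mul_le {x K m v : ℝ≥0∞} {β : ℝ} (hβ : 0 ≤ β)
    (hx : x ≤ K * v) (hm : m ≤ 1) (hv₀ : v ≠ 0) (hv : v ≠ ⊤) :
    x ^ β * (m / v) ^ (1 + β) * v ≤ K ^ β * m := by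
  have hvβ₀ : v ^ β ≠ 0 := (ENNReal.rpow_pos (pos_iff_ne_zero.2 hv₀) hv).ne'
  have hvβ : v ^ β ≠ ⊤ := ENNReal.rpow_ne_top_of_nonneg hβ hv
  have hdiv : (m / v) ^ (1 + β) * v = m ^ (1 + β) / v ^ β := by
    rw [ENNReal.div_rpow_of_nonneg _ _ (by linarith), ENNReal.rpow_add _ _ hv₀ hv,
      ENNReal.rpow_one, div_eq_mul_inv, div_eq_mul_inv, ENNReal.mul_inv (Or.inl hv₀) (Or.inl hv),
      mul_assoc, mul_comm _ v, ← mul_assoc v, ENNReal.mul_inv_cancel hv₀ hv, one_mul]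
  calc x ^ β * (m / v) ^ (1 + β) * v = x ^ β * (m ^ (1 + β) / v ^ β) := by rw [mul_assoc, hdiv]
    _ ≤ (K ^ β * v ^ β) * (m / v ^ β) := by
      gcongr
      · rw [← ENNReal.mul_rpow_of_nonneg _ _ hβ]; gcongr
      · exact ENNReal.rpow_le_self_of_le_one hm (by linarith)
    _ = K ^ β * m := by
      rw [mul_assoc, ENNReal.mul_div_cancel hvβ₀ hvβ]

end ENNReal

namespace Rect

variable {n : ℕ}

theorem set_eq_preimage_pi (R : Rect n) :
    R.set = (MeasurableEquiv.toLp 2 (Fin n → ℝ)).symm ⁻¹'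
      univ.pi fun i => Ico (R.lo i) (R.hi i) := by
  ext x
  simp [Rect.set, Set.mem_pi, MeasurableEquiv.coe_toLp_symm]

theorem measurableSet_set (R : Rect n) : MeasurableSet R.set := by
  rw [set_eq_preimage_pi]
  exact (MeasurableEquiv.toLp 2 (Fin n → ℝ)).symm.measurable
    (MeasurableSet.univ_pi fun _ => measurableSet_Ico)

theorem volume_set (R : Rect n) : volume R.set = ∏ i, ENNReal.ofReal (R.hi i - R.lo i) := by
  rw [set_eq_preimage_pi,
    (EuclideanSpace.volume_preserving_symm_measurableEquiv_toLp (Fin n)).measure_preimage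
      (MeasurableSet.univ_pi fun _ => measurableSet_Ico).nullMeasurableSet,
    volume_pi_pi]
  simp [Real.volume_Ico]

theorem volume_set_ne_zero (R : Rect n) : volume R.set ≠ 0 := by
  simpa [volume_set, Finset.prod_eq_zero_iff] using R.lt

theorem volume_set_ne_top (R : Rect n) : volume R.set ≠ ⊤ := by
  simp [volume_set, ENNReal.prod_ne_top]

theorem isBounded_set (R : Rect n) : Bornology.IsBounded R.set := by
  refine ((isCompact_univ_pi fun i => isCompact_Icc (a := R.lo i) (b := R.hi i)).image
    (PiLp.continuous_toLp 2 _)).isBounded.subset fun x hx => ?_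
  exact ⟨x.ofLp, fun i _ => Ico_subset_Icc_self (hx i), rfl⟩

theorem measure_set_ne_top (μ : Measure (ES n)) [IsLocallyFiniteMeasure μ] (R : Rect n) :
    μ R.set ≠ ⊤ :=
  R.isBounded_set.measure_lt_top.ne

theorem wMeas_set_ne_top {w : ES n → ℝ} (hw : LocallyIntegrable w volume) (R : Rect n) :
    wMeas w R.set ≠ ⊤ :=
  ((hw.integrableOn_isCompact R.isBounded_set.isCompact_closure).mono_set
    subset_closure).lintegral_lt_top.ne

theorem diam_nonneg (R : Rect n) : 0 ≤ R.diam := Real.sqrt_nonneg _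

theorem diam_eq_mul_of_sides {R S : Rect n} {c : ℝ} (hc : 0 ≤ c)
    (h : ∀ i, S.hi i - S.lo i = c * (R.hi i - R.lo i)) : S.diam = c * R.diam := by
  simp_rw [Rect.diam, h, mul_pow, ← Finset.mul_sum]
  rw [Real.sqrt_mul (sq_nonneg c), Real.sqrt_sq hc]

theorem volume_set_eq_mul_of_sides {R S : Rect n} {c : ℝ} (hc : 0 ≤ c)
    (h : ∀ i, S.hi i - S.lo i = c * (R.hi i - R.lo i)) :
    volume S.set = ENNReal.ofReal c ^ n * volume R.set := by
  simp_rw [volume_set, h, ENNReal.ofReal_mul hc, Finset.prod_mul_distrib, Finset.prod_const,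
    Finset.card_univ, Fintype.card_fin]

theorem DyadicSub.set_subset {R S : Rect n} (h : R.DyadicSub S) : S.set ⊆ R.set := by
  obtain ⟨j, k, hk, hlo, hhi⟩ := h
  intro x hx i
  have hside : 0 < R.hi i - R.lo i := sub_pos.2 (R.lt i)
  have hk' : (k i : ℝ) + 1 ≤ 2 ^ j := by exact_mod_cast hk i
  have hlo_le : R.lo i ≤ S.lo i := by
    rw [hlo i]; exact le_add_of_nonneg_right (by positivity)
  have hhi_le : S.hi i ≤ R.hi i := by
    have : ((k i : ℝ) + 1) * (R.hi i - R.lo i) / 2 ^ j ≤ R.hi i - R.lo i := by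
      rw [div_le_iff₀ (by positivity)]; nlinarith
    linarith [hhi i]
  exact ⟨hlo_le.trans (hx i).1, (hx i).2.trans_le hhi_le⟩

theorem DyadicSub.exists_sides_eq {R S : Rect n} (h : R.DyadicSub S) :
    ∃ c : ℝ, 0 < c ∧ ∀ i, S.hi i - S.lo i = c * (R.hi i - R.lo i) := by
  obtain ⟨j, k, -, hlo, hhi⟩ := h
  exact ⟨(2 ^ j)⁻¹, by positivity, fun i => by rw [hlo i, hhi i]; field_simp; ring⟩

theorem DyadicSub.exists_scale {R S : Rect n} (h : R.DyadicSub S) (δ : ℝ) :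
    ∃ ρ : ℝ≥0∞, ρ ≠ 0 ∧ ρ ≠ ⊤ ∧ volume S.set / volume R.set = ρ ^ (n : ℝ) ∧
      ENNReal.ofReal (S.diam ^ δ) = ρ ^ δ * ENNReal.ofReal (R.diam ^ δ) := by
  obtain ⟨c, hc, hside⟩ := h.exists_sides_eq
  refine ⟨ENNReal.ofReal c, (ENNReal.ofReal_pos.2 hc).ne', ENNReal.ofReal_ne_top, ?_, ?_⟩
  · rw [volume_set_eq_mul_of_sides hc.le hside,
      ENNReal.mul_div_cancel_right R.volume_set_ne_zero R.volume_set_ne_top, ENNReal.rpow_natCast]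
  · rw [diam_eq_mul_of_sides hc.le hside, Real.mul_rpow hc.le R.diam_nonneg,
      ENNReal.ofReal_mul (by positivity), ENNReal.ofReal_rpow_of_pos hc]

end Rect

section Muckenhoupt

variable {X : Type} [MeasureSpace X] {F : Set (Set X)} {q : ℝ} {w : X → ℝ} {E S : Set X}

theorem volume_rpow_le_wMeas_mul_lintegral_rpow (hq : 1 < q)
    (hw : AEMeasurable (wE w) (volume.restrict S)) (hw₀ : ∀ᵐ x ∂volume.restrict S, wE w x ≠ 0) :
    volume S ^ q ≤ wMeas w S * (∫⁻ x in S, wE w x ^ (-1 / (q - 1))) ^ (q - 1) := by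
  have hq₀ : q ≠ 0 := by linarith
  have hq₁ : q - 1 ≠ 0 := by linarith
  have hfg : ∀ᵐ x ∂volume.restrict S, (1 : ℝ≥0∞) = wE w x ^ (1 / q) * wE w x ^ (-(1 / q)) := by
    filter_upwards [hw₀] with x hx
    rw [← ENNReal.rpow_add _ _ hx ENNReal.ofReal_ne_top, add_neg_cancel, ENNReal.rpow_zero]
  have hHolder := ENNReal.lintegral_mul_le_Lp_mul_Lq (volume.restrict S)
    (Real.HolderConjugate.conjExponent hq) (hw.pow_const (1 / q)) (hw.pow_const (-(1 / q)))
  simp only [Pi.mul_apply, ← ENNReal.rpow_mul, ← lintegral_congr_ae hfg, lintegral_one,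
    Measure.restrict_apply_univ, Real.conjExponent] at hHolder
  have h₁ : 1 / q * q = 1 := by field_simp
  have h₂ : -(1 / q) * (q / (q - 1)) = -1 / (q - 1) := by field_simp
  rw [h₁, h₂] at hHolder
  calc volume S ^ q ≤ ((∫⁻ x in S, wE w x ^ (1 : ℝ)) ^ (1 / q) *
        (∫⁻ x in S, wE w x ^ (-1 / (q - 1))) ^ (1 / (q / (q - 1)))) ^ q :=
      ENNReal.rpow_le_rpow hHolder (by linarith)
    _ = wMeas w S * (∫⁻ x in S, wE w x ^ (-1 / (q - 1))) ^ (q - 1) := by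
      rw [ENNReal.mul_rpow_of_nonneg _ _ (by linarith), ← ENNReal.rpow_mul, ← ENNReal.rpow_mul,
        h₁, ENNReal.rpow_one]
      simp only [ENNReal.rpow_one, wMeas]
      congr 2
      field_simp

theorem wMeas_mul_volume_le_aqConstOn_one (hE : E ∈ F) (hSE : S ⊆ E) (hK : aqConstOn F 1 w ≠ ⊤)
    (hE₀ : volume E ≠ 0) (hE_top : volume E ≠ ⊤) (hwS : wMeas w S ≠ ⊤) :
    wMeas w E * volume S ≤ aqConstOn F 1 w * (volume E * wMeas w S) := by
  have hK_def : aqConstOn F 1 w =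
      sInf {c | ∀ E ∈ F, lavg (wE w) E ≤ c * essInf (wE w) (volume.restrict E)} := if_pos rfl
  have hess : essInf (wE w) (volume.restrict E) * volume S ≤ wMeas w S := by
    rw [← setLIntegral_const]
    exact lintegral_mono_ae (ae_restrict_of_ae_restrict_of_subset hSE ae_essInf_le)
  rw [← ENNReal.div_le_iff_le_mul (Or.inr hK) (Or.inl (ENNReal.mul_ne_top hE_top hwS)), hK_def]
  refine le_sInf fun c hc => ENNReal.div_le_of_le_mul ?_
  have hwE : wMeas w E ≤ c * essInf (wE w) (volume.restrict E) * volume E :=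
    (ENNReal.div_le_iff hE₀ hE_top).1 (hc E hE)
  calc wMeas w E * volume S ≤ c * essInf (wE w) (volume.restrict E) * volume E * volume S := by
        gcongr
    _ = c * (essInf (wE w) (volume.restrict E) * volume S) * volume E := by ring
    _ ≤ c * wMeas w S * volume E := by gcongr
    _ = c * (volume E * wMeas w S) := by ring

theorem wMeas_mul_volume_rpow_le_aqConstOn (hq : 1 < q) (hw : AEMeasurable (wE w) (volume.restrict E))
    (hE : E ∈ F) (hSE : S ⊆ E) (hK : aqConstOn F q w ≠ ⊤) (hE₀ : volume E ≠ 0)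
    (hE_top : volume E ≠ ⊤) :
    wMeas w E * volume S ^ q ≤ aqConstOn F q w * (volume E ^ q * wMeas w S) := by
  set σ : X → ℝ≥0∞ := fun x => wE w x ^ (-1 / (q - 1))
  have hAq : lavg (wE w) E * lavg σ E ^ (q - 1) ≤ aqConstOn F q w := by
    rw [aqConstOn, if_neg hq.ne']
    exact le_iSup₂ (f := fun E _ => lavg (wE w) E * lavg σ E ^ (q - 1)) E hE
  rcases eq_or_ne (wMeas w E) 0 with hwE | hwE
  · simp [hwE]
  have hσ : ∫⁻ x in E, σ x ≠ ⊤ := by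
    intro hσ
    have : lavg (wE w) E * lavg σ E ^ (q - 1) = ⊤ := by
      rw [show lavg σ E = ⊤ from by rw [lavg, hσ, ENNReal.top_div_of_ne_top hE_top],
        ENNReal.top_rpow_of_pos (by linarith)]
      exact ENNReal.mul_top (ENNReal.div_pos hwE hE_top).ne'
    exact hK (top_le_iff.1 (this ▸ hAq))
  have hw₀ : ∀ᵐ x ∂volume.restrict E, wE w x ≠ 0 := by
    filter_upwards [ae_lt_top' (hw.pow_const _) hσ] with x hx hx₀
    rw [hx₀, ENNReal.zero_rpow_of_neg (div_neg_of_neg_of_pos (by norm_num) (by linarith))] at hx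
    exact lt_irrefl _ hx
  have hS : volume S ^ q ≤ wMeas w S * (∫⁻ x in E, σ x) ^ (q - 1) :=
    (volume_rpow_le_wMeas_mul_lintegral_rpow hq (hw.mono_measure (Measure.restrict_mono hSE le_rfl))
      (ae_restrict_of_ae_restrict_of_subset hSE hw₀)).trans (by gcongr)
  have hE_pow : volume E ^ q = volume E * volume E ^ (q - 1) := by
    conv_lhs => rw [← add_sub_cancel 1 q, ENNReal.rpow_add_of_nonneg _ _ zero_le_one (by linarith),
      ENNReal.rpow_one]
  calc wMeas w E * volume S ^ q ≤ wMeas w E * (wMeas w S * (∫⁻ x in E, σ x) ^ (q - 1)) := by gcongr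
    _ = (lavg (wE w) E * volume E) * (lavg σ E * volume E) ^ (q - 1) * wMeas w S := by
      simp only [lavg, wMeas, ENNReal.div_mul_cancel hE₀ hE_top]; ring
    _ = lavg (wE w) E * lavg σ E ^ (q - 1) * (volume E ^ q * wMeas w S) := by
      rw [ENNReal.mul_rpow_of_nonneg _ _ (by linarith), hE_pow]; ring
    _ ≤ aqConstOn F q w * (volume E ^ q * wMeas w S) := by gcongr

theorem rpow_volume_div_le_aqConstOn_mul_wMeas_div (hq : 1 ≤ q)
    (hw : AEMeasurable (wE w) (volume.restrict E)) (hE : E ∈ F) (hSE : S ⊆ E)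
    (hK : aqConstOn F q w ≠ ⊤) (hE₀ : volume E ≠ 0) (hE_top : volume E ≠ ⊤)
    (hwE₀ : wMeas w E ≠ 0) (hwE_top : wMeas w E ≠ ⊤) :
    (volume S / volume E) ^ q ≤ aqConstOn F q w * (wMeas w S / wMeas w E) := by
  have hmul : wMeas w E * volume S ^ q ≤ aqConstOn F q w * (volume E ^ q * wMeas w S) := by
    rcases hq.eq_or_lt with rfl | hq
    · simpa using wMeas_mul_volume_le_aqConstOn_one hE hSE hK hE₀ hE_top
        (ne_top_of_le_ne_top hwE_top (lintegral_mono_set hSE))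
    · exact wMeas_mul_volume_rpow_le_aqConstOn hq hw hE hSE hK hE₀ hE_top
  have hq₀ : 0 ≤ q := by linarith
  rw [ENNReal.div_rpow_of_nonneg _ _ hq₀, ENNReal.div_le_iff
    (ENNReal.rpow_pos (pos_iff_ne_zero.2 hE₀) hE_top).ne' (ENNReal.rpow_ne_top_of_nonneg hq₀ hE_top)]
  calc volume S ^ q = wMeas w E * volume S ^ q / wMeas w E := by
        rw [mul_comm, ENNReal.mul_div_cancel_right hwE₀ hwE_top]
    _ ≤ aqConstOn F q w * (volume E ^ q * wMeas w S) / wMeas w E := by gcongr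
    _ = aqConstOn F q w * (wMeas w S / wMeas w E) * volume E ^ q := by
        simp only [div_eq_mul_inv]; ring

end Muckenhoupt

def fracFunctional {n : ℕ} (δ p : ℝ) (μ : Measure (ES n)) (w : ES n → ℝ) (R : Rect n) : ℝ≥0∞ :=
  ENNReal.ofReal (R.diam ^ δ) * (μ R.set / wMeas w R.set) ^ (1 / p)

theorem fracFunctional_rpow_mul_wMeas_div_le {n : ℕ} {δ p q pM β γ : ℝ} {μ : Measure (ES n)}
    {w : ES n → ℝ} {R S : Rect n} (hS : R.DyadicSub S) (hq : 1 ≤ q)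
    (hw : AEMeasurable (wE w) (volume.restrict R.set)) (hK : aqR n q w ≠ ⊤)
    (hwR : wMeas w R.set ≠ ⊤) (hμR : μ R.set ≠ ⊤) (hp : 0 < p) (hpM : 0 < pM) (hβ : 0 ≤ β)
    (h₁ : 1 / p * pM = 1 + β) (h₂ : δ * pM = n * q * β + n * γ) :
    fracFunctional δ p μ w S ^ pM * wMeas w S.set / wMeas w R.set ≤
      aqR n q w ^ β * (volume S.set / volume R.set) ^ γ * fracFunctional δ p μ w R ^ pM *
        (μ S.set / μ R.set) := by
  obtain ⟨ρ, hρ₀, hρ_top, hvol, hdiam⟩ := hS.exists_scale δ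
  have hSR := hS.set_subset
  rcases eq_or_ne (wMeas w S.set) 0 with hwS | hwS
  · simp [hwS]
  rcases eq_or_ne (μ S.set) 0 with hμS | hμS
  · simp [fracFunctional, hμS, hp, hpM]
  have hwR₀ : wMeas w R.set ≠ 0 := fun h => hwS (le_antisymm (h ▸ lintegral_mono_set hSR) bot_le)
  have hμR₀ : μ R.set ≠ 0 := fun h => hμS (measure_mono_null hSR h)
  set K := aqR n q w
  set m := μ S.set / μ R.set
  set v := wMeas w S.set / wMeas w R.set
  have hm : m ≤ 1 := ENNReal.div_le_of_le_mul (by rw [one_mul]; exact measure_mono hSR)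
  have hv₀ : v ≠ 0 := ENNReal.div_ne_zero.2 ⟨hwS, hwR⟩
  have hv_top : v ≠ ⊤ := ENNReal.div_ne_top (ne_top_of_le_ne_top hwR (lintegral_mono_set hSR)) hwR₀
  have hAq : (ρ ^ (n : ℝ)) ^ q ≤ K * v := hvol ▸ rpow_volume_div_le_aqConstOn_mul_wMeas_div hq hw
    ⟨R, rfl⟩ hSR hK R.volume_set_ne_zero R.volume_set_ne_top hwR₀ hwR
  have hwS_eq : wMeas w S.set = v * wMeas w R.set := (ENNReal.div_mul_cancel hwR₀ hwR).symm
  have hfrac : fracFunctional δ p μ w S = ρ ^ δ * (m / v) ^ (1 / p) * fracFunctional δ p μ w R := by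
    have : μ S.set / wMeas w S.set = m / v * (μ R.set / wMeas w R.set) := by
      rw [← ENNReal.mul_div_mul_comm (Or.inl hv₀) (Or.inr hwR₀), ENNReal.div_mul_cancel hμR₀ hμR,
        ← hwS_eq]
    rw [fracFunctional, fracFunctional, hdiam, this, ENNReal.mul_rpow_of_nonneg _ _ (by positivity)]
    ring
  have hρ_pow : ρ ^ (δ * pM) = ((ρ ^ (n : ℝ)) ^ q) ^ β * (ρ ^ (n : ℝ)) ^ γ := by
    rw [h₂, ENNReal.rpow_add _ _ hρ₀ hρ_top, ← ENNReal.rpow_mul, ← ENNReal.rpow_mul,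
      ← ENNReal.rpow_mul, mul_assoc]
  calc fracFunctional δ p μ w S ^ pM * wMeas w S.set / wMeas w R.set
      = ((ρ ^ (n : ℝ)) ^ q) ^ β * (m / v) ^ (1 + β) * v *
          ((ρ ^ (n : ℝ)) ^ γ * fracFunctional δ p μ w R ^ pM) := by
        rw [hwS_eq, ← mul_assoc, ENNReal.mul_div_cancel_right hwR₀ hwR, hfrac,
          ENNReal.mul_rpow_of_nonneg _ _ hpM.le, ENNReal.mul_rpow_of_nonneg _ _ hpM.le,
          ← ENNReal.rpow_mul, ← ENNReal.rpow_mul, h₁, hρ_pow]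
        ring
    _ ≤ K ^ β * m * ((ρ ^ (n : ℝ)) ^ γ * fracFunctional δ p μ w R ^ pM) := by
        gcongr ?_ * _
        exact ENNReal.rpow_mul_div_rpow_one_add_mul_le hβ hAq hm hv₀ hv_top
    _ = K ^ β * (volume S.set / volume R.set) ^ γ * fracFunctional δ p μ w R ^ pM * m := by
        rw [hvol]; ring

theorem tsum_fracFunctional_rpow_mul_wMeas_div_le {n : ℕ} {δ p q pM β γ : ℝ}
    {μ : Measure (ES n)} {w : ES n → ℝ} {R : Rect n} {S : Set ℕ} {T : ℕ → Rect n}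
    (hT : ∀ i ∈ S, R.DyadicSub (T i)) (hdisj : S.PairwiseDisjoint fun i => (T i).set)
    (hq : 1 ≤ q) (hw : AEMeasurable (wE w) (volume.restrict R.set)) (hK : aqR n q w ≠ ⊤)
    (hwR : wMeas w R.set ≠ ⊤) (hμR : μ R.set ≠ ⊤) (hp : 0 < p) (hpM : 0 < pM) (hβ : 0 ≤ β)
    (hγ : 0 ≤ γ) (h₁ : 1 / p * pM = 1 + β) (h₂ : δ * pM = n * q * β + n * γ) :
    ∑' i : S, fracFunctional δ p μ w (T i) ^ pM * wMeas w (T i).set / wMeas w R.set ≤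
      aqR n q w ^ β * (volume (⋃ i ∈ S, (T i).set) / volume R.set) ^ γ *
        fracFunctional δ p μ w R ^ pM := by
  set C := aqR n q w ^ β * (volume (⋃ i ∈ S, (T i).set) / volume R.set) ^ γ *
    fracFunctional δ p μ w R ^ pM with hC
  have hU : (⋃ i ∈ S, (T i).set) ⊆ R.set := iUnion₂_subset fun i hi => (hT i hi).set_subset
  calc ∑' i : S, fracFunctional δ p μ w (T i) ^ pM * wMeas w (T i).set / wMeas w R.set
      ≤ ∑' i : S, C * (μ (T i).set / μ R.set) := ENNReal.tsum_le_tsum fun i =>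
        (fracFunctional_rpow_mul_wMeas_div_le (hT i i.2) hq hw hK hwR hμR hp hpM hβ h₁ h₂).trans
          (by rw [hC]; gcongr; exact subset_biUnion_of_mem (u := fun i => (T i).set) i.2)
    _ = C * (μ (⋃ i ∈ S, (T i).set) / μ R.set) := by
        rw [measure_biUnion S.to_countable hdisj fun i _ => (T i).measurableSet_set,
          ENNReal.tsum_mul_left]
        simp only [div_eq_mul_inv, ENNReal.tsum_mul_right]
    _ ≤ C := mul_le_of_le_one_right' (ENNReal.div_le_of_le_mul (by rw [one_mul]; exact measure_mono hU))

theorem stmt14_general (n : ℕ) (hn : 1 ≤ n) (p q : ℝ) (hq : 1 ≤ q)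
    (δ : ℝ) (hδ : 0 < δ)
    (w : ES n → ℝ) (hwi : LocallyIntegrable w volume)
    (hwA : aqR n q w ≠ ⊤)
    (μ : Measure (ES n)) (hμ : IsLocallyFiniteMeasure μ)
    (M pM : ℝ) (hM : 1 < M) (hsub : δ / (n * q * M) < 1 / p)
    (hpM : 1 / p - 1 / pM = δ / (n * q * M))
    (R : Rect n) (S : Set ℕ) (T : ℕ → Rect n)
    (hT : ∀ i ∈ S, R.DyadicSub (T i))
    (hdisj : S.PairwiseDisjoint fun i => (T i).set) :
    (∑' i : S,
        (ENNReal.ofReal ((T ↑i).diam ^ δ) * (μ (T ↑i).set / wMeas w (T ↑i).set) ^ (1 / p)) ^ pM *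
          wMeas w (T ↑i).set / wMeas w R.set) ^ (1 / pM)
      ≤ aqR n q w ^ (δ / (n * q * M)) *
          (volume (⋃ i ∈ S, (T i).set) / volume R.set) ^ (δ / ((n : ℝ) * (M / (M - 1)))) *
          (ENNReal.ofReal (R.diam ^ δ) * (μ R.set / wMeas w R.set) ^ (1 / p)) := by
  have hn₀ : (0 : ℝ) < n := by exact_mod_cast hn
  have hε : 0 < δ / (n * q * M) := by positivity
  have hp : 0 < p := one_div_pos.1 (hε.trans hsub)
  have hpM₀ : 0 < pM := one_div_pos.1 (by linarith)
  have hM₁ : 0 < M - 1 := by linarith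
  have h₁ : 1 / p * pM = 1 + δ / (n * q * M) * pM := by
    rw [show 1 / p = 1 / pM + δ / (n * q * M) by linarith]; field_simp
  have h₂ : δ * pM = n * q * (δ / (n * q * M) * pM) + n * (δ / (n * (M / (M - 1))) * pM) := by
    field_simp; ring
  have hsum := tsum_fracFunctional_rpow_mul_wMeas_div_le hT hdisj hq
    hwi.aestronglyMeasurable.aemeasurable.ennreal_ofReal.restrict hwA (R.wMeas_set_ne_top hwi)
    (R.measure_set_ne_top μ) hp hpM₀ (by positivity) (by positivity) h₁ h₂
  rw [one_div pM, ENNReal.rpow_inv_le_iff hpM₀, ENNReal.mul_rpow_of_nonneg _ _ hpM₀.le,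
    ENNReal.mul_rpow_of_nonneg _ _ hpM₀.le, ← ENNReal.rpow_mul, ← ENNReal.rpow_mul]
  exact hsum

/-- the functional `a(R) = d(R)^δ (μ(R)/w(R))^{1/p}` satisfies the
`SD`-smallness-preservation estimate at the exponent `p*_M`. -/
theorem stmt14 (n : ℕ) (hn : 1 ≤ n) (p q : ℝ) (hq : 1 ≤ q) (hqp : q ≤ p) (hp : p < n)
    (δ : ℝ) (hδ : 0 < δ)
    (w : ES n → ℝ) (hw : ∀ x, 0 ≤ w x) (hwi : LocallyIntegrable w volume)
    (hwA : aqR n q w ≠ ⊤)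
    (μ : Measure (ES n)) (hμ : IsLocallyFiniteMeasure μ)
    (M pM : ℝ) (hM : 1 < M) (hsub : δ / (n * q * M) < 1 / p)
    (hpM : 1 / p - 1 / pM = δ / (n * q * M))
    (R : Rect n) (S : Set ℕ) (T : ℕ → Rect n)
    (hT : ∀ i ∈ S, R.DyadicSub (T i))
    (hdisj : S.PairwiseDisjoint fun i => (T i).set) :
    (∑' i : S,
        (ENNReal.ofReal ((T ↑i).diam ^ δ) * (μ (T ↑i).set / wMeas w (T ↑i).set) ^ (1 / p)) ^ pM *
          wMeas w (T ↑i).set / wMeas w R.set) ^ (1 / pM)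
      ≤ aqR n q w ^ (δ / (n * q * M)) *
          (volume (⋃ i ∈ S, (T i).set) / volume R.set) ^ (δ / ((n : ℝ) * (M / (M - 1)))) *
          (ENNReal.ofReal (R.diam ^ δ) * (μ R.set / wMeas w R.set) ^ (1 / p)) :=
  stmt14_general n hn p q hq δ hδ w hwi hwA μ hμ M pM hM hsub hpM R S T hT hdisj

end
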